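/- arXiv:2603.04282 — 2 statements merged into one kernel-verified Lean document; each statement's English description precedes it below -/
import Mathlib

section
/- If m ∈ Sym_h(ℤ)∨ is not positive semidefinite, then every weakly holomorphic Jacobi form of weight k and index m vanishes identically. -/
noncomputable section
open Matrix Complex
open scoped Manifold MatrixGroups

abbrev SL2Z := Matrix.SpecialLinearGroup (Fin 2) ℤ
abbrev UHP := UpperHalfPlane

/-- `e(x) = exp(2 π i x)`. -/
def eC (x : ℂ) : ℂ := Complex.exp (2 * Real.pi * Complex.I * x)

/-- Coerce a rational matrix to a complex one. -/
def mC {h : ℕ} (m : Matrix (Fin h) (Fin h) ℚ) : Matrix (Fin h) (Fin h) ℂ :=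
  m.map fun a => (a : ℂ)

def intVec {h : ℕ} (v : Fin h → ℤ) : Fin h → ℂ := fun i => (v i : ℂ)
def ratVec {h : ℕ} (v : Fin h → ℚ) : Fin h → ℂ := fun i => (v i : ℂ)

/-- `m ∈ Sym_h(ℤ)∨`: symmetric with integral diagonal and half-integral
off-diagonal entries. -/
def IsJacobiIndex {h : ℕ} (m : Matrix (Fin h) (Fin h) ℚ) : Prop :=
  m.IsSymm ∧ (∀ i, ∃ n : ℤ, m i i = n) ∧ ∀ i j, ∃ n : ℤ, 2 * m i j = n

/-- weight-`k` index-`m` Jacobi slash action of `SL(2,ℤ)`. -/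
def jslashSL {h : ℕ} (k : ℤ) (m : Matrix (Fin h) (Fin h) ℚ)
    (φ : UHP → (Fin h → ℂ) → ℂ) (γ : SL2Z) : UHP → (Fin h → ℂ) → ℂ := fun τ z =>
  let c : ℂ := ((γ 1 0 : ℤ) : ℂ)
  let d : ℂ := ((γ 1 1 : ℤ) : ℂ)
  (c * (τ : ℂ) + d) ^ (-k) * eC (-(c * (z ⬝ᵥ mC m *ᵥ z)) * (c * (τ : ℂ) + d)⁻¹) *
    φ (γ • τ) ((c * (τ : ℂ) + d)⁻¹ • z)

/-- weight-`k` index-`m` Jacobi slash action of a (real) Heisenberg element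
`(λ, μ, κ)`. -/
def jslashH {h : ℕ} (m : Matrix (Fin h) (Fin h) ℚ) (φ : UHP → (Fin h → ℂ) → ℂ)
    (lam mu : Fin h → ℂ) (kap : Matrix (Fin h) (Fin h) ℂ) : UHP → (Fin h → ℂ) → ℂ :=
  fun τ z =>
    eC ((lam ⬝ᵥ mC m *ᵥ lam) * (τ : ℂ) + 2 * (lam ⬝ᵥ mC m *ᵥ z)
        + (mC m * (kap + vecMulVec mu lam)).trace) * φ τ (z + (τ : ℂ) • lam + mu)

/-- The block matrix `(2n, rᵀ; r, 2m)` over `ℝ`. -/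
def bigMat {h : ℕ} (m : Matrix (Fin h) (Fin h) ℚ) (n : ℤ) (r : Fin h → ℤ) :
    Matrix (Unit ⊕ Fin h) (Unit ⊕ Fin h) ℝ :=
  Matrix.fromBlocks (Matrix.of fun _ _ => (2 * n : ℝ)) (Matrix.of fun _ j => (r j : ℝ))
    (Matrix.of fun i _ => (r i : ℝ)) ((2 : ℝ) • m.map fun a => (a : ℝ))

/-- A weakly holomorphic Jacobi form of genus 1, cogenus `h`, weight `k` and
index `m`, bundled with its Fourier coefficients. -/
structure WeakJacobiForm (h : ℕ) (k : ℤ) (m : Matrix (Fin h) (Fin h) ℚ) where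
  toFun : UHP → (Fin h → ℂ) → ℂ
  holo_tau : ∀ z, MDifferentiable 𝓘(ℂ) 𝓘(ℂ) fun τ : UHP => toFun τ z
  holo_z : ∀ τ, Differentiable ℂ fun z => toFun τ z
  inv_sl : ∀ γ : SL2Z, jslashSL k m toFun γ = toFun
  inv_heis : ∀ (lam mu : Fin h → ℤ) (kap : Matrix (Fin h) (Fin h) ℤ),
    ((kap.map fun a => (a : ℚ)) +
      vecMulVec (fun i => (mu i : ℚ)) fun i => (lam i : ℚ)).IsSymm →
    jslashH m toFun (intVec lam) (intVec mu) (kap.map fun a => (a : ℂ)) = toFun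
  coeff : ℤ → (Fin h → ℤ) → ℂ
  expansion : ∀ τ z, toFun τ z =
    ∑' p : ℤ × (Fin h → ℤ), coeff p.1 p.2 * eC ((p.1 : ℂ) * (τ : ℂ) + intVec p.2 ⬝ᵥ z)
  bdd_below : ∃ n₀ : ℤ, ∀ n r, n < n₀ → coeff n r = 0

/-- The Fourier support condition singling out holomorphic Jacobi forms among
weakly holomorphic ones. -/
def WeakJacobiForm.IsHolomorphicJF {h : ℕ} {k : ℤ} {m : Matrix (Fin h) (Fin h) ℚ}
    (φ : WeakJacobiForm h k m) : Prop :=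
  ∀ n r, ¬ (bigMat m n r).PosSemidef → φ.coeff n r = 0

/-- Specialization `φ[α,β]` of a Jacobi form to the torsion point `z = ατ + β`. -/
def torsionSpec {h : ℕ} (m : Matrix (Fin h) (Fin h) ℚ) (φ : UHP → (Fin h → ℂ) → ℂ)
    (α β : Fin h → ℚ) : UHP → ℂ :=
  fun τ => jslashH m φ (ratVec α) (ratVec β) (vecMulVec (ratVec α) (ratVec β)) τ 0

/-- `OrdGE f c` formalizes that the vanishing order of `f` at `i∞` is at least
`c`: the function `f(τ) e(-cτ)` is bounded on `im τ ≥ 1`. -/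
def OrdGE (f : UHP → ℂ) (c : ℝ) : Prop :=
  ∃ C : ℝ, ∀ τ : UHP, 1 ≤ τ.im → ‖f τ * Complex.exp (-(2 * Real.pi * Complex.I * c * (τ : ℂ)))‖ ≤ C

/-- The weight-`k` slash action on functions on the upper half plane. -/
def eslash (k : ℤ) (f : UHP → ℂ) (γ : SL2Z) : UHP → ℂ := fun τ =>
  (((γ 1 0 : ℤ) : ℂ) * (τ : ℂ) + ((γ 1 1 : ℤ) : ℂ)) ^ (-k) * f (γ • τ)

/-! If `m[s] < 0` for an integral vector `s`, then for fixed `τ` and `z` the entire function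
`F(w) = φ(τ, z + w s)` is `1`-periodic and satisfies `|F(w + τ)| = |F(w)| e^(A + 4π m[s] Im w)`
by the Heisenberg invariance: it is a theta function of negative index. Multiplying `|F|` by a
suitable Gaussian in `Im w` makes it doubly periodic, hence bounded, so `F` is bounded, constant by
Liouville, and then zero since a nonzero constant cannot pick up the factor `e^(A + 4π m[s] Im w)`.
Such an `s` exists because the cone where a non-semidefinite form is negative is open and
nonempty, hence contains rational points. -/

open Function Set Bornology

theorem Complex.isCompact_range_of_periodic {α : Type*} [TopologicalSpace α] {f : ℂ → α}
    {τ : ℂ} (hf : Continuous f) (hτ : 0 < τ.im) (h1 : Periodic f 1) (hτf : Periodic f τ) :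
    IsCompact (range f) := by
  let K := (fun p : ℝ × ℝ => (p.1 : ℂ) + p.2 * τ) '' Icc 0 1 ×ˢ Icc 0 1
  have hK : IsCompact K := (isCompact_Icc.prod isCompact_Icc).image (by fun_prop)
  suffices range f ⊆ f '' K by
    rw [← (image_subset_range f K).antisymm this]
    exact hK.image hf
  rintro _ ⟨w, rfl⟩
  obtain ⟨b, hb⟩ : ∃ b : ℝ, b * τ.im = w.im := ⟨w.im / τ.im, div_mul_cancel₀ _ hτ.ne'⟩
  obtain ⟨a, ha⟩ : ∃ a : ℝ, a + b * τ.re = w.re := ⟨w.re - b * τ.re, by ring⟩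
  have hw : w - ⌊b⌋ * τ - ⌊a⌋ * 1 = Int.fract a + Int.fract b * τ := by
    apply Complex.ext <;> simp only [Int.fract, Complex.sub_re, Complex.sub_im, Complex.add_re,
      Complex.add_im, Complex.mul_re, Complex.mul_im, Complex.ofReal_re, Complex.ofReal_im,
      Complex.intCast_re, Complex.intCast_im, Complex.one_re, Complex.one_im]
    · linear_combination -ha
    · linear_combination -hb
  refine ⟨_, ⟨(Int.fract a, Int.fract b),
    ⟨⟨Int.fract_nonneg a, (Int.fract_lt_one a).le⟩, ⟨Int.fract_nonneg b, (Int.fract_lt_one b).le⟩⟩,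
    rfl⟩, ?_⟩
  simp only [← hw, h1.sub_int_mul_eq, hτf.sub_int_mul_eq]

theorem Complex.isBounded_range_of_norm_quasiperiodic {E : Type*} [NormedAddCommGroup E]
    {F : ℂ → E} {τ : ℂ} {A B : ℝ} (hF : Continuous F) (hτ : 0 < τ.im) (hB : B < 0)
    (h1 : Periodic F 1) (hτF : ∀ w, ‖F (w + τ)‖ = ‖F w‖ * Real.exp (A + B * w.im)) :
    IsBounded (range F) := by
  -- `a, b` solve `a ((y + v) ^ 2 - y ^ 2) + b v = -(A + B y)` for `v = τ.im`,
  -- which makes `N` invariant under `w ↦ w + τ`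
  set a := -B / (2 * τ.im)
  set b := B / 2 - A / τ.im
  let N : ℂ → ℝ := fun w => ‖F w‖ * Real.exp (a * w.im ^ 2 + b * w.im)
  have hN1 : Periodic N 1 := fun w => by simp [N, h1 w]
  have hNτ : Periodic N τ := fun w => by
    simp only [N, hτF, Complex.add_im, mul_assoc, ← Real.exp_add]
    congr 2
    simp only [a, b]
    field_simp
    ring
  obtain ⟨C, hC⟩ := (isCompact_range_of_periodic (by fun_prop) hτ hN1 hNτ).bddAbove
  have ha : 0 < a := div_pos (by linarith) (by positivity)
  refine isBounded_iff_forall_norm_le.2 ⟨C * Real.exp (b ^ 2 / (4 * a)), ?_⟩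
  rintro _ ⟨w, rfl⟩
  have hNw : N w ≤ C := hC (mem_range_self w)
  have hFw : ‖F w‖ = N w * Real.exp (-(a * w.im ^ 2 + b * w.im)) := by
    simp only [N, mul_assoc, ← Real.exp_add, add_neg_cancel, Real.exp_zero, mul_one]
  rw [hFw]
  gcongr
  · exact (mul_nonneg (norm_nonneg _) (Real.exp_pos _).le).trans hNw
  · rw [le_div_iff₀ (by positivity)]
    nlinarith [sq_nonneg (2 * a * w.im + b)]

theorem Complex.eq_zero_of_norm_quasiperiodic {E : Type*} [NormedAddCommGroup E]
    [NormedSpace ℂ E] {F : ℂ → E} {τ : ℂ} {A B : ℝ} (hF : Differentiable ℂ F)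
    (hτ : 0 < τ.im) (hB : B < 0) (h1 : Periodic F 1)
    (hτF : ∀ w, ‖F (w + τ)‖ = ‖F w‖ * Real.exp (A + B * w.im)) : F = 0 := by
  have hconst : ∀ w, F w = F 0 := fun w => hF.apply_eq_apply_of_bounded
    (isBounded_range_of_norm_quasiperiodic hF.continuous hτ hB h1 hτF) w 0
  -- a nonzero constant cannot pick up the factor `exp (A + B * y) = e` at `y = (1 - A) / B`
  set w : ℂ := ((1 - A) / B : ℝ) * I
  have hAB : A + B * w.im = 1 := by
    simp only [w, Complex.mul_im, Complex.ofReal_re, Complex.ofReal_im, Complex.I_re,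
      Complex.I_im]
    field_simp [hB.ne]
    ring
  have he := hτF w
  rw [hconst (w + τ), hconst w, hAB] at he
  have : ‖F 0‖ = 0 := by nlinarith [Real.add_one_lt_exp one_ne_zero, norm_nonneg (F 0)]
  exact funext fun w => (hconst w).trans (norm_eq_zero.1 this)

theorem Matrix.exists_dotProduct_mulVec_neg_of_not_posSemidef {n : Type*} [Fintype n]
    {M : Matrix n n ℝ} (hM : M.IsHermitian) (h : ¬ M.PosSemidef) : ∃ x, x ⬝ᵥ M *ᵥ x < 0 := by
  by_contra! hx
  exact h (posSemidef_iff_dotProduct_mulVec.2 ⟨hM, fun x => by simpa using hx x⟩)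

theorem Matrix.exists_int_dotProduct_mulVec_neg {n : Type*} [Fintype n] {m : Matrix n n ℚ}
    {x : n → ℝ} (hx : x ⬝ᵥ m.map (↑) *ᵥ x < 0) :
    ∃ s : n → ℤ, (fun i => (s i : ℚ)) ⬝ᵥ m *ᵥ (fun i => (s i : ℚ)) < 0 := by
  have hopen : IsOpen {x : n → ℝ | x ⬝ᵥ m.map (↑) *ᵥ x < 0} :=
    isOpen_lt (by fun_prop) continuous_const
  obtain ⟨y, hy⟩ :=
    (DenseRange.piMap fun _ => Rat.denseRange_cast (𝕜 := ℝ)).exists_mem_open hopen ⟨x, hx⟩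
  replace hy : y ⬝ᵥ m *ᵥ y < 0 := by
    have : ((y ⬝ᵥ m *ᵥ y : ℚ) : ℝ) < 0 := by simpa [dotProduct, mulVec] using hy
    exact_mod_cast this
  obtain ⟨b, hb⟩ := IsLocalization.exist_integer_multiples (nonZeroDivisors ℤ) Finset.univ y
  choose s hs using fun i => hb i (Finset.mem_univ i)
  have hsy : (fun i => (s i : ℚ)) = ((b : ℤ) : ℚ) • y := funext fun i => by
    simpa [zsmul_eq_mul] using hs i
  have hb0 : ((b : ℤ) : ℚ) ≠ 0 := by exact_mod_cast nonZeroDivisors.coe_ne_zero b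
  refine ⟨s, ?_⟩
  rw [hsy, mulVec_smul, dotProduct_smul, smul_dotProduct, smul_eq_mul, smul_eq_mul, ← mul_assoc]
  exact mul_neg_of_pos_of_neg (mul_self_pos.2 hb0) hy

@[simp]
theorem intVec_zero {h : ℕ} : intVec (0 : Fin h → ℤ) = 0 := by
  ext; simp [intVec]

theorem norm_eC (x : ℂ) : ‖eC x‖ = Real.exp (-(2 * Real.pi * x.im)) := by
  simp [eC, Complex.norm_exp, Complex.mul_re]

namespace WeakJacobiForm

variable {h : ℕ} {k : ℤ} {m : Matrix (Fin h) (Fin h) ℚ} (φ : WeakJacobiForm h k m)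

theorem toFun_add_intVec (τ : UHP) (z : Fin h → ℂ) (μ : Fin h → ℤ) :
    φ.toFun τ (z + intVec μ) = φ.toFun τ z := by
  have := congrFun (congrFun (φ.inv_heis 0 μ 0 (by ext; simp [vecMulVec_apply])) τ) z
  simpa [jslashH, intVec, eC] using this

theorem eC_mul_toFun_add_smul_intVec (τ : UHP) (z : Fin h → ℂ) (lam : Fin h → ℤ) :
    eC ((intVec lam ⬝ᵥ mC m *ᵥ intVec lam) * τ + 2 * (intVec lam ⬝ᵥ mC m *ᵥ z)) *
      φ.toFun τ (z + (τ : ℂ) • intVec lam) = φ.toFun τ z := by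
  have := congrFun (congrFun (φ.inv_heis lam 0 0 (by ext; simp [vecMulVec_apply])) τ) z
  simpa [jslashH, intVec] using this

theorem toFun_eq_zero_of_dotProduct_mulVec_neg {s : Fin h → ℤ}
    (hs : (fun i => (s i : ℚ)) ⬝ᵥ m *ᵥ (fun i => (s i : ℚ)) < 0) (τ : UHP) (z : Fin h → ℂ) :
    φ.toFun τ z = 0 := by
  set q : ℚ := (fun i => (s i : ℚ)) ⬝ᵥ m *ᵥ (fun i => (s i : ℚ))
  have hq : intVec s ⬝ᵥ mC m *ᵥ intVec s = q := by
    simp [q, intVec, mC, dotProduct, mulVec]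
  set b : ℂ := 2 * (intVec s ⬝ᵥ mC m *ᵥ z)
  let F : ℂ → ℂ := fun w => φ.toFun τ (z + w • intVec s)
  have hF : Differentiable ℂ F := (φ.holo_z τ).comp (by fun_prop)
  have h1 : Periodic F 1 := fun w => by
    simp only [F, add_smul, one_smul, ← add_assoc, toFun_add_intVec]
  have hτF : ∀ w, ‖F (w + τ)‖ =
      ‖F w‖ * Real.exp (2 * Real.pi * (q * (τ : ℂ).im + b.im) + 4 * Real.pi * q * w.im) := by
    intro w
    have hw := congrArg norm (φ.eC_mul_toFun_add_smul_intVec τ (z + w • intVec s) s)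
    rw [norm_mul, norm_eC, add_assoc, ← add_smul, mulVec_add, mulVec_smul, dotProduct_add,
      dotProduct_smul, hq] at hw
    have him : ((q : ℂ) * τ + 2 * (intVec s ⬝ᵥ mC m *ᵥ z + w • (q : ℂ))).im
        = q * (τ : ℂ).im + b.im + 2 * q * w.im := by
      simp [b, Complex.mul_im]
      ring
    rw [← hw, him, mul_comm (Real.exp _), mul_assoc, ← Real.exp_add,
      show -(2 * Real.pi * (q * (τ : ℂ).im + b.im + 2 * q * w.im)) +
        (2 * Real.pi * (q * (τ : ℂ).im + b.im) + 4 * Real.pi * q * w.im) = 0 by ring,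
      Real.exp_zero, mul_one]
  have hB : 4 * Real.pi * q < 0 :=
    mul_neg_of_pos_of_neg (by positivity) (by exact_mod_cast hs)
  simpa [F] using congrFun (Complex.eq_zero_of_norm_quasiperiodic hF τ.2 hB h1 hτF) 0

end WeakJacobiForm

/-- If `m ∈ Sym_h(ℤ)∨` is not positive semidefinite, then every weakly
holomorphic Jacobi form of weight `k` and index `m` vanishes identically. -/
theorem stmt7 (h : ℕ) (k : ℤ) (m : Matrix (Fin h) (Fin h) ℚ)
    (hm : IsJacobiIndex m)
    (hnpsd : ¬ (m.map fun a => (a : ℝ)).PosSemidef)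
    (φ : WeakJacobiForm h k m) :
    ∀ τ z, φ.toFun τ z = 0 := by
  obtain ⟨x, hx⟩ := exists_dotProduct_mulVec_neg_of_not_posSemidef
    (isHermitian_iff_isSymm.2 (hm.1.map _)) hnpsd
  obtain ⟨s, hs⟩ := exists_int_dotProduct_mulVec_neg hx
  exact φ.toFun_eq_zero_of_dotProduct_mulVec_neg hs
end
end

section
/- Let φ be a weakly holomorphic Jacobi form of weight k and index m, α, β ∈ ℚ^h, and γ ∈ SL(2,ℤ). Then φ[α,β]|_k γ = e(m(αβᵀ − α'β'ᵀ)) · φ[α', β'], where (α', β') = (α, β)γ (right vector-matrix action on the pair of row vectors). -/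
noncomputable section
open Matrix Complex
open scoped Manifold MatrixGroups

/-!
Put `D = cτ + d`, `σ = γτ` and `(α', β') = (aα + cβ, bα + dβ)`. Invariance of `φ` under `γ`
gives `φ(σ, w) = D^k e(cD m[w]) φ(τ, Dw)`, and `D(σα + β) = τα' + β'` because `Dσ = aτ + b`.
Hence both sides are a multiple of `φ(τ, τα' + β')`, the automorphy factors `D^{∓k}` cancel, and
the two exponents agree by an identity that is linear in `m[α]`, `αᵀmβ`, `m[β]` and uses only
`Dσ = aτ + b` and `ad − bc = 1`.
-/

lemma eC_add (x y : ℂ) : eC (x + y) = eC x * eC y := by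
  simp [eC, mul_add, Complex.exp_add]

lemma eC_neg_mul_eC (x : ℂ) : eC (-x) * eC x = 1 := by
  rw [← eC_add, neg_add_cancel, eC, mul_zero, Complex.exp_zero]

section MatrixForms

variable {n R : Type*} [Fintype n]

lemma Matrix.trace_mul_vecMulVec [CommSemiring R] (M : Matrix n n R) (u v : n → R) :
    (M * vecMulVec u v).trace = v ⬝ᵥ M *ᵥ u := by
  rw [mul_vecMulVec, trace_vecMulVec, dotProduct_comm]

lemma Matrix.IsSymm.dotProduct_mulVec_comm [CommSemiring R] {M : Matrix n n R} (hM : M.IsSymm)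
    (x y : n → R) : x ⬝ᵥ M *ᵥ y = y ⬝ᵥ M *ᵥ x := by
  rw [dotProduct_mulVec, ← mulVec_transpose, hM.eq, dotProduct_comm]

lemma jacobi_exponent_identity {M : Matrix n n ℂ} (hM : M.IsSymm) (A B : n → ℂ) {a b c d τ σ : ℂ}
    (hdet : a * d - b * c = 1) (hσ : (c * τ + d) * σ = a * τ + b) :
    (A ⬝ᵥ M *ᵥ A) * σ + 2 * (A ⬝ᵥ M *ᵥ B)
        + c * (c * τ + d) * ((σ • A + B) ⬝ᵥ M *ᵥ (σ • A + B))
      = (B ⬝ᵥ M *ᵥ A - (b • A + d • B) ⬝ᵥ M *ᵥ (a • A + c • B))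
        + (((a • A + c • B) ⬝ᵥ M *ᵥ (a • A + c • B)) * τ
          + 2 * ((a • A + c • B) ⬝ᵥ M *ᵥ (b • A + d • B))) := by
  have hBA := hM.dotProduct_mulVec_comm B A
  simp only [mulVec_add, mulVec_smul, dotProduct_add, add_dotProduct, dotProduct_smul,
    smul_dotProduct, smul_eq_mul, hBA]
  -- compare coefficients of `A·MA`, `A·MB`, `B·MB`; no division by `cτ + d` is needed
  linear_combination ((A ⬝ᵥ M *ᵥ A) * (c * σ + a) + 2 * c * (A ⬝ᵥ M *ᵥ B)) * hσ
    - ((A ⬝ᵥ M *ᵥ A) * σ + A ⬝ᵥ M *ᵥ B) * hdet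

end MatrixForms

lemma denom_smul_add_smul {V : Type*} [AddCommGroup V] [Module ℂ V] (A B : V)
    {a b c d τ σ : ℂ} (hσ : (c * τ + d) * σ = a * τ + b) :
    (c * τ + d) • (σ • A + B) = τ • (a • A + c • B) + (b • A + d • B) := by
  rw [smul_add, smul_smul, hσ]
  module

section SL2Z

variable (γ : SL2Z) (τ : UHP)

lemma SL2Z.det_coe_complex :
    ((γ 0 0 : ℤ) : ℂ) * (γ 1 1 : ℤ) - ((γ 0 1 : ℤ) : ℂ) * (γ 1 0 : ℤ) = 1 := by
  have hdet := γ.2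
  rw [Matrix.det_fin_two] at hdet
  exact_mod_cast hdet

lemma SL2Z.denom_ne_zero : ((γ 1 0 : ℤ) : ℂ) * τ + (γ 1 1 : ℤ) ≠ 0 := by
  have h := UpperHalfPlane.denom_ne_zero γ τ
  rwa [ModularGroup.denom_apply] at h

lemma SL2Z.denom_mul_coe_smul :
    (((γ 1 0 : ℤ) : ℂ) * τ + (γ 1 1 : ℤ)) * (γ • τ : UHP)
      = ((γ 0 0 : ℤ) : ℂ) * τ + (γ 0 1 : ℤ) := by
  rw [UpperHalfPlane.coe_specialLinearGroup_apply]
  simp only [algebraMap_int_eq, eq_intCast, Complex.ofReal_intCast]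
  exact mul_div_cancel₀ _ (SL2Z.denom_ne_zero γ τ)

end SL2Z

section Jacobi

variable {h : ℕ} {m : Matrix (Fin h) (Fin h) ℚ}

lemma mC_isSymm (hm : m.IsSymm) : (mC m).IsSymm := by
  rw [Matrix.IsSymm, mC, ← Matrix.transpose_map, hm.eq]

lemma apply_smul_of_jslashSL_eq {k : ℤ} {f : UHP → (Fin h → ℂ) → ℂ} {γ : SL2Z}
    (hf : jslashSL k m f γ = f) (τ : UHP) (w : Fin h → ℂ) :
    f (γ • τ) w = (((γ 1 0 : ℤ) : ℂ) * τ + (γ 1 1 : ℤ)) ^ k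
      * (eC ((γ 1 0 : ℤ) * (((γ 1 0 : ℤ) : ℂ) * τ + (γ 1 1 : ℤ)) * (w ⬝ᵥ mC m *ᵥ w))
        * f τ ((((γ 1 0 : ℤ) : ℂ) * τ + (γ 1 1 : ℤ)) • w)) := by
  have hD := SL2Z.denom_ne_zero γ τ
  set D : ℂ := ((γ 1 0 : ℤ) : ℂ) * τ + (γ 1 1 : ℤ)
  have hw := congrFun (congrFun hf τ) (D • w)
  simp only [jslashSL] at hw
  rw [← hw, smul_smul, inv_mul_cancel₀ hD, one_smul, mulVec_smul, dotProduct_smul,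
    smul_dotProduct, smul_eq_mul, smul_eq_mul]
  have harg : -(((γ 1 0 : ℤ) : ℂ) * (D * (D * (w ⬝ᵥ mC m *ᵥ w)))) * D⁻¹
      = -((γ 1 0 : ℤ) * D * (w ⬝ᵥ mC m *ᵥ w)) := by
    field_simp
  rw [harg, ← mul_assoc, ← mul_assoc, mul_mul_mul_comm, ← zpow_add₀ hD, add_neg_cancel,
    zpow_zero, one_mul, mul_comm (eC _), eC_neg_mul_eC, one_mul]

lemma ratVec_add_smul (r s : ℚ) (α β : Fin h → ℚ) :
    ratVec (r • α + s • β) = (r : ℂ) • ratVec α + (s : ℂ) • ratVec β := by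
  ext i
  simp [ratVec]

lemma torsionSpec_apply (hm : m.IsSymm) (f : UHP → (Fin h → ℂ) → ℂ) (α β : Fin h → ℚ)
    (τ : UHP) :
    torsionSpec m f α β τ = eC ((ratVec α ⬝ᵥ mC m *ᵥ ratVec α) * τ
      + 2 * (ratVec α ⬝ᵥ mC m *ᵥ ratVec β)) * f τ ((τ : ℂ) • ratVec α + ratVec β) := by
  simp only [torsionSpec, jslashH, mulVec_zero, dotProduct_zero, mul_zero, add_zero, zero_add,
    Matrix.mul_add, trace_add, Matrix.trace_mul_vecMulVec,
    (mC_isSymm hm).dotProduct_mulVec_comm (ratVec β)]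
  ring_nf

end Jacobi

/-- `φ[α,β]|_k γ = e(m(αβᵀ − α'β'ᵀ))·φ[α',β']` with `(α',β') = (α,β)γ`. -/
theorem stmt11 (h : ℕ) (k : ℤ) (m : Matrix (Fin h) (Fin h) ℚ)
    (hm : IsJacobiIndex m) (φ : WeakJacobiForm h k m)
    (α β : Fin h → ℚ) (γ : SL2Z) :
    eslash k (torsionSpec m φ.toFun α β) γ = fun τ =>
      eC ((mC m * (vecMulVec (ratVec α) (ratVec β) -
        vecMulVec (ratVec ((γ 0 0 : ℚ) • α + (γ 1 0 : ℚ) • β))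
          (ratVec ((γ 0 1 : ℚ) • α + (γ 1 1 : ℚ) • β)))).trace) *
      torsionSpec m φ.toFun ((γ 0 0 : ℚ) • α + (γ 1 0 : ℚ) • β)
        ((γ 0 1 : ℚ) • α + (γ 1 1 : ℚ) • β) τ := by
  funext τ
  have hD := SL2Z.denom_ne_zero γ τ
  have hσ := SL2Z.denom_mul_coe_smul γ τ
  rw [eslash, torsionSpec_apply hm.1, torsionSpec_apply hm.1,
    apply_smul_of_jslashSL_eq (φ.inv_sl γ), Matrix.mul_sub, trace_sub,
    Matrix.trace_mul_vecMulVec, Matrix.trace_mul_vecMulVec]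
  simp only [ratVec_add_smul, Rat.cast_intCast]
  rw [denom_smul_add_smul _ _ hσ]
  have hexponent := congrArg eC <|
    jacobi_exponent_identity (mC_isSymm hm.1) (ratVec α) (ratVec β) (SL2Z.det_coe_complex γ) hσ
  rw [eC_add, eC_add (_ - _)] at hexponent
  rw [mul_left_comm (eC _), ← mul_assoc, ← zpow_add₀ hD, neg_add_cancel, zpow_zero, one_mul,
    ← mul_assoc, hexponent, mul_assoc]
end
end
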